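/- For every nonempty class F of sequential experts, every t ∈ {0,…,T}, and all sequences x_{1:t} ∈ X^t, y_{1:t} ∈ Y^t, the value-to-go equals the worst-case log contextual Shtarkov sum with prefix: G(F, x_{1:t}, y_{1:t}) = sup_x log S_T(F, x | x_{1:t}, y_{1:t}), the supremum being over all context trees x of depth T−t (equality in the extended reals). -/

import Mathlib

open scoped BigOperators

/-- The probability simplex on a finite label set `Y`. -/
abbrev Simplex (Y : Type*) [Fintype Y] :=
  {p : Y → ℝ // (∀ y, 0 ≤ p y) ∧ ∑ y, p y = 1}

/-- A sequential expert: given contexts `x₁,…,x_t` (a list of length `t`) and past labels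
`y₁,…,y_{t-1}` (a list of length `t-1`), it predicts a distribution over labels. -/
abbrev Expert (X Y : Type*) [Fintype Y] := List X → List Y → Simplex Y

/-- `-log x` as an extended real, with `-log 0 = ⊤` (and junk value `⊤` for `x < 0`). -/
noncomputable def negLog (x : ℝ) : EReal :=
  if x ≤ 0 then ⊤ else ((-Real.log x : ℝ) : EReal)

/-- `log x` as an extended real, with `log 0 = ⊥` (and junk value `⊥` for `x < 0`). -/
noncomputable def elog (x : ℝ) : EReal :=
  if x ≤ 0 then ⊥ else ((Real.log x : ℝ) : EReal)

/-- The logarithmic loss `ℓ(p, y) = -log p(y) ∈ [0, ∞]`. -/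
noncomputable def logloss {Y : Type*} [Fintype Y] (p : Simplex Y) (y : Y) : EReal :=
  negLog (p.1 y)

/-- Likelihood of expert `f` on a context sequence `xs` and a label sequence `ys`
of the same length: `L(f; y_{1:d} | x_{1:d}) = ∏_{t=1}^d f(x_{1:t}, y_{1:t-1})(y_t)`. -/
noncomputable def likelihood {X Y : Type*} [Fintype Y] [Inhabited Y]
    (f : Expert X Y) (xs : List X) (ys : List Y) : ℝ :=
  ∏ t ∈ Finset.range ys.length, (f (xs.take (t + 1)) (ys.take t)).1 (ys.getD t default)

/-- Cumulative log loss of expert `f` on `xs`, `ys`: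
`Σ_{t=1}^d ℓ(f(x_{1:t}, y_{1:t-1}), y_t)`. -/
noncomputable def cumLoss {X Y : Type*} [Fintype Y] [Inhabited Y]
    (f : Expert X Y) (xs : List X) (ys : List Y) : EReal :=
  ∑ t ∈ Finset.range ys.length, logloss (f (xs.take (t + 1)) (ys.take t)) (ys.getD t default)

/-- A context tree of depth `T` is modelled as a map `χ : List Y → X` (only its values on
lists of length `< T` matter): `x_t(y) = χ (y_{1:t-1})`.  `treePath χ ys` is the context
sequence `x(y) = (x_1, x_2(y_1), …)` obtained by tracing the tree along the path `ys`. -/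
def treePath {X Y : Type*} (χ : List Y → X) (ys : List Y) : List X :=
  (List.range ys.length).map fun t => χ (ys.take t)

/-- The contextual Shtarkov sum of `F` on a context tree `χ` of depth `r`, with prefix
`xs ∈ X^t`, `ys ∈ Y^t`:
`S_T(F, χ | x_{1:t}, y_{1:t}) = Σ_{y ∈ Y^r} sup_{f ∈ F} L(f; (y_{1:t}, y) | (x_{1:t}, χ(y)))`. -/
noncomputable def shtarkovPrefix {X Y : Type*} [Fintype Y] [Inhabited Y]
    (F : Set (Expert X Y)) (r : ℕ) (χ : List Y → X) (xs : List X) (ys : List Y) : ℝ :=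
  ∑ y : Fin r → Y, ⨆ f : F,
    likelihood (f : Expert X Y) (xs ++ treePath χ (List.ofFn y)) (ys ++ List.ofFn y)

/-- The contextual Shtarkov sum `S_T(F | χ) = Σ_{y ∈ Y^T} sup_{f ∈ F} L(f; y | χ(y))`. -/
noncomputable def shtarkov {X Y : Type*} [Fintype Y] [Inhabited Y]
    (F : Set (Expert X Y)) (T : ℕ) (χ : List Y → X) : ℝ :=
  shtarkovPrefix F T χ [] []

/-- The extensive-form game value with `r` rounds to go, given past contexts `xs`, past
labels `ys`, and accumulated learner loss `acc`:
`sup_{x} inf_{p̂} sup_{y} ⋯ [ acc + Σ ℓ(p̂_s, y_s) − inf_{f ∈ F} Σ_{s=1}^T ℓ(f, y_s) ]`. -/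
noncomputable def valToGo {X Y : Type*} [Fintype Y] [Inhabited Y]
    (F : Set (Expert X Y)) : ℕ → List X → List Y → EReal → EReal
  | 0, xs, ys, acc => acc - ⨅ f : F, cumLoss (f : Expert X Y) xs ys
  | r + 1, xs, ys, acc =>
      ⨆ x : X, ⨅ p : Simplex Y, ⨆ y : Y,
        valToGo F r (xs ++ [x]) (ys ++ [y]) (acc + logloss p y)

/-- The minimax regret
`R_T(F) = sup_{x_1} inf_{p̂_1} sup_{y_1} ⋯ sup_{x_T} inf_{p̂_T} sup_{y_T} R_T(F; p̂, x, y)`. -/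
noncomputable def minimaxRegret {X Y : Type*} [Fintype Y] [Inhabited Y]
    (F : Set (Expert X Y)) (T : ℕ) : EReal :=
  valToGo F T [] [] 0

/-- Nested conditional expectation over a probabilistic tree `π`, for `r` remaining rounds:
`E_{y_1 ∼ π([])} E_{y_2 ∼ π(y_{1:1})} ⋯ [g(y_{1:r})]`. -/
noncomputable def expTree {Y : Type*} [Fintype Y] (π : List Y → Simplex Y)
    (g : List Y → EReal) : ℕ → List Y → EReal
  | 0, pre => g pre
  | r + 1, pre => ∑ y : Y, ((π pre).1 y : EReal) * expTree π g r (pre ++ [y])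

/-- The dual (max-min) value-to-go `W(F, x_{1:t}, y_{1:t})`: the supremum over context trees
`χ` and probabilistic trees `π` of depth `r = T - t` of
`E_{y∼π}[ Σ_{s=t+1}^T ℓ(π_s(y), y_s) − inf_{f ∈ F} Σ_{s=1}^T ℓ(f, y_s) ]`. -/
noncomputable def dualValToGo {X Y : Type*} [Fintype Y] [Inhabited Y]
    (F : Set (Expert X Y)) (r : ℕ) (xs : List X) (ys : List Y) : EReal :=
  ⨆ χ : List Y → X, ⨆ π : List Y → Simplex Y,
    expTree π (fun suf =>
      (∑ s ∈ Finset.range r, logloss (π (suf.take s)) (suf.getD s default)) -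
        ⨅ f : F, cumLoss (f : Expert X Y) (xs ++ treePath χ suf) (ys ++ suf)) r []

/-- The dual (max-min) value `V_T(F)`. -/
noncomputable def dualValue {X Y : Type*} [Fintype Y] [Inhabited Y]
    (F : Set (Expert X Y)) (T : ℕ) : EReal :=
  dualValToGo F T [] []

/-!
Exponentiate. `EReal.exp` is an order isomorphism onto `ℝ≥0∞` turning sums into products,
and its conventions `⊥ + ⊤ = ⊥` and `0 * ⊤ = 0` agree, so infinite losses need no
separate treatment. After exponentiating, a round of the game reads
`sup_x inf_p sup_y W(x, y) / p(y)`, where `W(x, y)` is the worst-case Shtarkov sum of the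
subgame. For fixed `x` the infimum over `p` equals `∑_y W(x, y)`: every `p` has some `y` with
`W(x, y) / p(y) ≥ ∑ W(x, ·)` because `p` sums to one, and the normalised maximum-likelihood
forecast `W(x, ·) / ∑ W(x, ·)` attains this bound. A context tree is a root context together
with an independent subtree for each first label, so the supremum over trees of the Shtarkov
sum is `sup_x ∑_y W(x, y)` as well.
-/

open scoped ENNReal

lemma elog_eq_log_ofReal (x : ℝ) : elog x = ENNReal.log (ENNReal.ofReal x) :=
  (ENNReal.log_ofReal x).symm

lemma negLog_eq_neg_elog (x : ℝ) : negLog x = -elog x := by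
  unfold negLog elog
  split_ifs <;> simp

lemma exp_negLog (x : ℝ) : EReal.exp (negLog x) = (ENNReal.ofReal x)⁻¹ := by
  rw [negLog_eq_neg_elog, EReal.exp_neg, elog_eq_log_ofReal, ENNReal.exp_log]

lemma EReal.exp_sum {ι : Type*} (s : Finset ι) (f : ι → EReal) :
    EReal.exp (∑ i ∈ s, f i) = ∏ i ∈ s, EReal.exp (f i) := by
  induction s using Finset.cons_induction with
  | empty => simp
  | cons i s hi ih => rw [Finset.sum_cons, Finset.prod_cons, EReal.exp_add, ih]

lemma EReal.exp_iSup {ι : Sort*} (f : ι → EReal) :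
    EReal.exp (⨆ i, f i) = ⨆ i, EReal.exp (f i) :=
  EReal.expOrderIso.map_iSup f

lemma EReal.exp_iInf {ι : Sort*} (f : ι → EReal) :
    EReal.exp (⨅ i, f i) = ⨅ i, EReal.exp (f i) :=
  EReal.expOrderIso.map_iInf f

lemma ENNReal.log_iSup {ι : Sort*} (f : ι → ℝ≥0∞) :
    ENNReal.log (⨆ i, f i) = ⨆ i, ENNReal.log (f i) :=
  ENNReal.logOrderIso.map_iSup f

lemma ENNReal.ofReal_ciSup {ι : Sort*} {f : ι → ℝ} (hf : BddAbove (Set.range f)) :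
    ENNReal.ofReal (⨆ i, f i) = ⨆ i, ENNReal.ofReal (f i) := by
  cases isEmpty_or_nonempty ι
  · simp
  · exact ENNReal.ofReal_mono.map_ciSup_of_continuousAt
      ENNReal.continuous_ofReal.continuousAt hf

lemma ENNReal.iSup_pi_sum_eq_sum_iSup {α κ : Type*} [Fintype α] (g : α → κ → ℝ≥0∞) :
    ⨆ h : α → κ, ∑ a, g a (h a) = ∑ a, ⨆ k, g a k := by
  have hdir : ∀ h₁ h₂ : α → κ, ∃ h : α → κ, ∀ a,
      g a (h₁ a) ≤ g a (h a) ∧ g a (h₂ a) ≤ g a (h a) := fun h₁ h₂ =>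
    ⟨fun a => if g a (h₁ a) ≤ g a (h₂ a) then h₂ a else h₁ a, fun a => by
      dsimp only
      split_ifs with hle
      · exact ⟨hle, le_rfl⟩
      · exact ⟨le_rfl, (not_le.mp hle).le⟩⟩
  rw [← ENNReal.finsetSum_iSup hdir]
  refine Finset.sum_congr rfl fun a _ => le_antisymm ?_ ?_
  · exact iSup_le fun h => le_iSup (g a) (h a)
  · exact iSup_le fun k => le_iSup (fun h : α → κ => g a (h a)) fun _ => k

lemma ENNReal.sum_le_iSup_div {α : Type*} [Fintype α] (d q : α → ℝ≥0∞)
    (hq : ∑ a, q a = 1) : ∑ a, d a ≤ ⨆ a, d a / q a := by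
  set M := ⨆ a, d a / q a
  rcases eq_or_ne M ∞ with hM | hM
  · exact hM ▸ le_top
  have hq_ne_top (a : α) : q a ≠ ∞ :=
    ne_top_of_le_ne_top one_ne_top (hq ▸ Finset.single_le_sum (fun _ _ => zero_le)
      (Finset.mem_univ a))
  calc ∑ a, d a ≤ ∑ a, M * q a := Finset.sum_le_sum fun a _ =>
        (ENNReal.div_le_iff_le_mul (Or.inr hM) (Or.inl (hq_ne_top a))).mp
          (le_iSup (fun a => d a / q a) a)
    _ = M := by rw [← Finset.mul_sum, hq, mul_one]

section Simplex
variable {Y : Type*} [Fintype Y]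

lemma Simplex.nonneg (p : Simplex Y) (y : Y) : 0 ≤ p.1 y := p.2.1 y

lemma Simplex.le_one (p : Simplex Y) (y : Y) : p.1 y ≤ 1 := by
  simpa only [p.2.2] using Finset.single_le_sum (fun i _ => p.2.1 i) (Finset.mem_univ y)

lemma Simplex.exists_ofReal_eq (q : Y → ℝ≥0∞) (hq : ∑ y, q y = 1) :
    ∃ p : Simplex Y, ∀ y, ENNReal.ofReal (p.1 y) = q y := by
  have hq_ne_top (y : Y) : q y ≠ ∞ :=
    ne_top_of_le_ne_top ENNReal.one_ne_top
      (hq ▸ Finset.single_le_sum (fun _ _ => zero_le) (Finset.mem_univ y))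
  refine ⟨⟨fun y => (q y).toReal, fun y => ENNReal.toReal_nonneg, ?_⟩,
    fun y => ENNReal.ofReal_toReal (hq_ne_top y)⟩
  rw [← ENNReal.toReal_sum fun y _ => hq_ne_top y, hq, ENNReal.toReal_one]

lemma Simplex.exists_div_le_sum [Nonempty Y] (d : Y → ℝ≥0∞) :
    ∃ p : Simplex Y, ∀ y, d y / ENNReal.ofReal (p.1 y) ≤ ∑ y, d y := by
  classical
  set S := ∑ y, d y
  by_cases hS : S = 0 ∨ S = ∞
  · obtain ⟨y₀⟩ := ‹Nonempty Y›
    obtain ⟨p, -⟩ := Simplex.exists_ofReal_eq (fun y => if y = y₀ then 1 else 0) (by simp)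
    refine ⟨p, fun y => ?_⟩
    rcases hS with hS | hS
    · simp [Finset.sum_eq_zero_iff.mp hS y (Finset.mem_univ y)]
    · exact hS ▸ le_top
  push Not at hS
  obtain ⟨p, hp⟩ := Simplex.exists_ofReal_eq (fun y => d y / S)
    (by simp only [div_eq_mul_inv, ← Finset.sum_mul]; exact ENNReal.mul_inv_cancel hS.1 hS.2)
  refine ⟨p, fun y => ?_⟩
  rw [hp]
  rcases eq_or_ne (d y) 0 with hy | hy
  · simp [hy]
  · have hy_ne_top : d y ≠ ∞ := ne_top_of_le_ne_top hS.2
      (Finset.single_le_sum (fun _ _ => zero_le) (Finset.mem_univ y))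
    rw [ENNReal.div_div_cancel hy hy_ne_top]

lemma Monotone.iInf_simplex_iSup_div {α : Type*} [CompleteLattice α] [Nonempty Y]
    {g : ℝ≥0∞ → α} (hg : Monotone g) (d : Y → ℝ≥0∞) :
    ⨅ p : Simplex Y, ⨆ y, g (d y / ENNReal.ofReal (p.1 y)) = g (∑ y, d y) := by
  refine le_antisymm ?_ (le_iInf fun p => ?_)
  · obtain ⟨p, hp⟩ := Simplex.exists_div_le_sum d
    exact iInf_le_of_le p (iSup_le fun y => hg (hp y))
  · obtain ⟨y, hy⟩ := exists_eq_ciSup_of_finite (f := fun y => d y / ENNReal.ofReal (p.1 y))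
    refine le_iSup_of_le y (hg ?_)
    rw [hy]
    refine ENNReal.sum_le_iSup_div d _ ?_
    rw [← ENNReal.ofReal_sum_of_nonneg fun y _ => p.nonneg y, p.2.2, ENNReal.ofReal_one]

end Simplex

lemma treePath_cons {X Y : Type*} (χ : List Y → X) (y : Y) (l : List Y) :
    treePath χ (y :: l) = χ [] :: treePath (fun s => χ (y :: s)) l := by
  simp [treePath, List.range_succ_eq_map]

def contextTreeEquiv (X Y : Type*) : (List Y → X) ≃ X × (Y → List Y → X) where
  toFun χ := (χ [], fun y s => χ (y :: s))
  invFun p l := l.casesOn p.1 p.2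
  left_inv χ := funext fun l => by cases l <;> rfl
  right_inv _ := rfl

section Experts
variable {X Y : Type*} [Fintype Y] [Inhabited Y]

lemma likelihood_nonneg (f : Expert X Y) (xs : List X) (ys : List Y) :
    0 ≤ likelihood f xs ys :=
  Finset.prod_nonneg fun _ _ => Simplex.nonneg _ _

lemma likelihood_le_one (f : Expert X Y) (xs : List X) (ys : List Y) :
    likelihood f xs ys ≤ 1 :=
  Finset.prod_le_one (fun _ _ => Simplex.nonneg _ _) fun _ _ => Simplex.le_one _ _

lemma exp_cumLoss (f : Expert X Y) (xs : List X) (ys : List Y) :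
    EReal.exp (cumLoss f xs ys) = (ENNReal.ofReal (likelihood f xs ys))⁻¹ := by
  rw [cumLoss, likelihood, EReal.exp_sum, ENNReal.ofReal_prod_of_nonneg
    fun _ _ => Simplex.nonneg _ _, ENNReal.prod_inv_distrib
    fun _ _ _ _ _ => Or.inr ENNReal.ofReal_ne_top]
  simp only [logloss, exp_negLog]

lemma shtarkovPrefix_nonneg (F : Set (Expert X Y)) (r : ℕ) (χ : List Y → X)
    (xs : List X) (ys : List Y) : 0 ≤ shtarkovPrefix F r χ xs ys :=
  Finset.sum_nonneg fun _ _ => Real.iSup_nonneg fun _ => likelihood_nonneg _ _ _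

lemma shtarkovPrefix_zero (F : Set (Expert X Y)) (χ : List Y → X) (xs : List X) (ys : List Y) :
    shtarkovPrefix F 0 χ xs ys = ⨆ f : F, likelihood (f : Expert X Y) xs ys := by
  simp [shtarkovPrefix, treePath]

lemma shtarkovPrefix_succ (F : Set (Expert X Y)) (r : ℕ) (χ : List Y → X)
    (xs : List X) (ys : List Y) :
    shtarkovPrefix F (r + 1) χ xs ys =
      ∑ y : Y, shtarkovPrefix F r (fun s => χ (y :: s)) (xs ++ [χ []]) (ys ++ [y]) := by
  rw [shtarkovPrefix, ← (Fin.consEquiv fun _ => Y).sum_comp, Fintype.sum_prod_type]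
  refine Finset.sum_congr rfl fun y _ => Finset.sum_congr rfl fun v _ => ?_
  simp [Fin.consEquiv, List.ofFn_succ, treePath_cons]

noncomputable def supShtarkovPrefix (F : Set (Expert X Y)) (r : ℕ) (xs : List X) (ys : List Y) :
    ℝ≥0∞ :=
  ⨆ χ : List Y → X, ENNReal.ofReal (shtarkovPrefix F r χ xs ys)

lemma supShtarkovPrefix_zero [Nonempty X] (F : Set (Expert X Y)) (xs : List X) (ys : List Y) :
    supShtarkovPrefix F 0 xs ys = ⨆ f : F, ENNReal.ofReal (likelihood (f : Expert X Y) xs ys) := by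
  simp only [supShtarkovPrefix, shtarkovPrefix_zero, iSup_const]
  exact ENNReal.ofReal_ciSup ⟨1, by rintro _ ⟨f, rfl⟩; exact likelihood_le_one _ _ _⟩

lemma supShtarkovPrefix_succ (F : Set (Expert X Y)) (r : ℕ) (xs : List X) (ys : List Y) :
    supShtarkovPrefix F (r + 1) xs ys =
      ⨆ x, ∑ y, supShtarkovPrefix F r (xs ++ [x]) (ys ++ [y]) := by
  simp only [supShtarkovPrefix, shtarkovPrefix_succ,
    ENNReal.ofReal_sum_of_nonneg fun _ _ => shtarkovPrefix_nonneg _ _ _ _ _,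
    ← ENNReal.iSup_pi_sum_eq_sum_iSup]
  rw [← (contextTreeEquiv X Y).symm.iSup_comp, iSup_prod]
  rfl

lemma exp_valToGo [Nonempty X] (F : Set (Expert X Y)) (r : ℕ) (xs : List X) (ys : List Y)
    (acc : EReal) :
    EReal.exp (valToGo F r xs ys acc) = EReal.exp acc * supShtarkovPrefix F r xs ys := by
  induction r generalizing xs ys acc with
  | zero =>
    rw [valToGo, sub_eq_add_neg, EReal.exp_add, EReal.exp_neg, EReal.exp_iInf,
      supShtarkovPrefix_zero]
    simp only [exp_cumLoss, ← ENNReal.inv_iSup, inv_inv]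
  | succ r ih =>
    have hround (x : X) (p : Simplex Y) (y : Y) :
        EReal.exp (valToGo F r (xs ++ [x]) (ys ++ [y]) (acc + logloss p y)) =
          EReal.exp acc * (supShtarkovPrefix F r (xs ++ [x]) (ys ++ [y]) /
            ENNReal.ofReal (p.1 y)) := by
      rw [ih, EReal.exp_add, logloss, exp_negLog, mul_assoc, ENNReal.div_eq_inv_mul]
    simp only [valToGo, EReal.exp_iSup, EReal.exp_iInf, hround]
    rw [supShtarkovPrefix_succ, ENNReal.mul_iSup]
    have hmono : Monotone (EReal.exp acc * ·) := fun _ _ h => mul_le_mul_right h _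
    exact iSup_congr fun x => hmono.iInf_simplex_iSup_div _

end Experts

theorem valToGo_eq_sup_log_shtarkovPrefix_general
    {X Y : Type*} [Fintype Y] [Inhabited Y] [Nonempty X]
    (F : Set (Expert X Y)) (T t : ℕ)
    (xs : List X) (ys : List Y) :
    valToGo F (T - t) xs ys 0 = ⨆ χ : List Y → X, elog (shtarkovPrefix F (T - t) χ xs ys) := by
  rw [← EReal.log_exp (valToGo F (T - t) xs ys 0), exp_valToGo, EReal.exp_zero, one_mul,
    supShtarkovPrefix, ENNReal.log_iSup]
  simp only [elog_eq_log_ofReal]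

/-- For every nonempty class `F` of sequential experts, every `t ∈ {0,…,T}`,
and all prefixes `x_{1:t} ∈ X^t`, `y_{1:t} ∈ Y^t`, the value-to-go equals the worst-case log
contextual Shtarkov sum with prefix:
`G(F, x_{1:t}, y_{1:t}) = sup_χ log S_T(F, χ | x_{1:t}, y_{1:t})`, supremum over all context
trees `χ` of depth `T − t` (equality in the extended reals). -/
theorem valToGo_eq_sup_log_shtarkovPrefix
    {X Y : Type*} [Fintype Y] [Inhabited Y] [Nonempty X]
    (F : Set (Expert X Y)) (hF : F.Nonempty) (T t : ℕ) (ht : t ≤ T)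
    (xs : List X) (ys : List Y) (hxs : xs.length = t) (hys : ys.length = t) :
    valToGo F (T - t) xs ys 0 = ⨆ χ : List Y → X, elog (shtarkovPrefix F (T - t) χ xs ys) :=
  valToGo_eq_sup_log_shtarkovPrefix_general F T t xs ys
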